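/- arXiv:1505.00768 — 3 statements merged into one kernel-verified Lean document; each statement's English description precedes it below -/
import Mathlib

section
/- Let 0 < β ≤ δ and let p : [0,∞) → ℝ be differentiable with p(0) ∈ (0,1] and p'(t) = β p(t)(1 − p(t)) − δ p(t) for all t ≥ 0. Then p(t) tends to 0 as t → ∞. -/
/-!
Positivity: along a solution, `p` satisfies the linear equation `p' = c(t) p` with
`c(t) = β (1 - p t) - δ` continuous, so by Grönwall a zero of `p` would propagate back to `t = 0`.
Decay: for `p > 0` one computes `(1/p)' = β + (δ - β)/p ≥ β`, so `1/p t ≥ 1/p 0 + β t → ∞`.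
-/

open Set Filter

theorem apply_left_eq_zero_of_hasDerivAt_eq_mul_self {f c : ℝ → ℝ} {a b : ℝ} (hab : a ≤ b)
    (hc : ContinuousOn c (Icc a b)) (hf : ∀ t ∈ Icc a b, HasDerivAt f (c t * f t) t)
    (hb : f b = 0) : f a = 0 := by
  obtain ⟨K, hK⟩ := isCompact_Icc.exists_bound_of_continuousOn hc
  have hrefl : ∀ s ∈ Icc a b, a + b - s ∈ Icc a b := fun s hs =>
    ⟨by linarith [hs.2], by linarith [hs.1]⟩
  -- time reversal `s ↦ a + b - s` turns the zero at `b` into an initial condition at `a`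
  set g : ℝ → ℝ := fun s => f (a + b - s)
  have hg : ∀ s ∈ Icc a b, HasDerivAt g (-(c (a + b - s) * f (a + b - s))) s := fun s hs => by
    refine ((hf _ (hrefl s hs)).comp s ((hasDerivAt_id s).const_sub (a + b))).congr_deriv ?_
    simp
  have hg_zero := eq_zero_of_abs_deriv_le_mul_abs_self_of_eq_zero_right (K := K)
    (fun s hs => (hg s hs).continuousAt.continuousWithinAt)
    (fun s hs => (hg s (Ico_subset_Icc_self hs)).hasDerivWithinAt)
    (by simp [g, hb])
    (fun s hs => by
      rw [norm_neg, norm_mul]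
      exact mul_le_mul_of_nonneg_right (hK _ (hrefl s (Ico_subset_Icc_self hs))) (norm_nonneg _))
  simpa [g] using hg_zero b (right_mem_Icc.2 hab)

theorem pos_of_hasDerivAt_eq_mul_self {f c : ℝ → ℝ} {a : ℝ} (hc : ContinuousOn c (Ici a))
    (hf : ∀ t ∈ Ici a, HasDerivAt f (c t * f t) t) (ha : 0 < f a) : ∀ t ∈ Ici a, 0 < f t := by
  intro t ht
  by_contra! hft
  have hcont : ContinuousOn f (Icc a t) := fun s hs =>
    (hf s (Icc_subset_Ici_self hs)).continuousAt.continuousWithinAt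
  obtain ⟨z, hz, hfz⟩ := intermediate_value_Icc' (mem_Ici.1 ht) hcont ⟨hft, ha.le⟩
  exact ha.ne' <| apply_left_eq_zero_of_hasDerivAt_eq_mul_self hz.1
    (hc.mono Icc_subset_Ici_self) (fun s hs => hf s (Icc_subset_Ici_self hs)) hfz

namespace SIS

variable {β δ : ℝ} {p : ℝ → ℝ}

theorem pos
    (hode : ∀ t : ℝ, 0 ≤ t → HasDerivAt p (β * p t * (1 - p t) - δ * p t) t)
    (hp0 : 0 < p 0) : ∀ t : ℝ, 0 ≤ t → 0 < p t := by
  have hc : ContinuousOn (fun t => β * (1 - p t) - δ) (Ici 0) := fun t ht =>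
    (continuousAt_const.mul (continuousAt_const.sub (hode t ht).continuousAt)
      |>.sub continuousAt_const).continuousWithinAt
  refine pos_of_hasDerivAt_eq_mul_self hc (fun t ht => ?_) hp0
  convert hode t ht using 1
  ring

theorem inv_add_mul_le_inv
    (hode : ∀ t : ℝ, 0 ≤ t → HasDerivAt p (β * p t * (1 - p t) - δ * p t) t)
    (hβδ : β ≤ δ) (hpos : ∀ t : ℝ, 0 ≤ t → 0 < p t) :
    ∀ t : ℝ, 0 ≤ t → (p 0)⁻¹ + β * t ≤ (p t)⁻¹ := by
  have hinv : ∀ t ∈ Ici (0 : ℝ), HasDerivAt (fun s => (p s)⁻¹) (β + (δ - β) / p t) t :=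
    fun t ht => by
      refine ((hode t ht).inv (hpos t ht).ne').congr_deriv ?_
      field_simp [(hpos t ht).ne']
      ring
  have hslope := (convex_Ici (0 : ℝ)).mul_sub_le_image_sub_of_le_deriv
    (fun t ht => (hinv t ht).continuousAt.continuousWithinAt)
    (fun t ht => (hinv t (interior_subset ht)).differentiableAt.differentiableWithinAt)
    (fun t ht => by
      have ht' := interior_subset ht
      rw [(hinv t ht').deriv]
      exact le_add_of_nonneg_right (div_nonneg (sub_nonneg.2 hβδ) (hpos t ht').le))
  intro t ht
  linarith [hslope 0 self_mem_Ici t ht ht]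

end SIS

/-- If `0 < β ≤ δ` and `p` solves the SIS ODE `p' = β p (1 − p) − δ p`
on `[0,∞)` with `p 0 ∈ (0,1]`, then `p t → 0` as `t → ∞`. -/
theorem stmt_3 (β δ : ℝ) (hβ : 0 < β) (hβδ : β ≤ δ)
    (p : ℝ → ℝ) (hp0 : p 0 ∈ Set.Ioc (0 : ℝ) 1)
    (hode : ∀ t : ℝ, 0 ≤ t → HasDerivAt p (β * p t * (1 - p t) - δ * p t) t) :
    Filter.Tendsto p Filter.atTop (nhds 0) := by
  have hbound := SIS.inv_add_mul_le_inv hode hβδ (SIS.pos hode hp0.1)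
  have hinv : Tendsto (fun t => (p t)⁻¹) atTop atTop :=
    tendsto_atTop_mono' _ ((eventually_ge_atTop 0).mono hbound)
      (tendsto_atTop_add_const_left _ _ (tendsto_id.const_mul_atTop hβ))
  simpa [Pi.inv_def] using hinv.inv_tendsto_atTop
end

section
/- Let N ≥ 1, let A be the adjacency matrix of a connected undirected graph on N nodes (A symmetric with entries in {0,1}, zero diagonal, and irreducible), let δ, β > 0, and let λ_max(A) denote the largest eigenvalue of the symmetric matrix A. If β/δ ≤ 1/λ_max(A), then every differentiable p : [0,∞) → ℝ^N with p(0) ∈ [0,1]^N satisfying pᵢ'(t) = −δ pᵢ(t) + β Σ_{j=1}^N a_{ij} p_j(t)(1 − pᵢ(t)) for all i and all t ≥ 0 converges to 0 as t → ∞. -/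
/-!
Irreducibility yields a Perron vector `v > 0` with `A v = λ v`: the absolute value of a top
eigenvector attains the Rayleigh bound `xᵀAx ≤ λ xᵀx`, hence is itself an eigenvector, and a
nonnegative eigenvector of an irreducible nonnegative matrix has no zero entry. The cube `[0,1]^N`
is invariant (a barrier argument at the first contact time). Finally `p < y v` for
`y = 1/(a + c t)`, which solves `y' = -c y²`: at a first contact `pᵢ = y vᵢ` the linear part
`(βλ - δ) y vᵢ` of the vector field is `≤ 0`, and the quadratic part `-βλ y² vᵢ²` beats `c y² vᵢ`.
So `p → 0` at rate `1/t`, also at the threshold `βλ = δ`.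
-/

/-- A nonnegative matrix is irreducible if, for every nonempty proper subset `S` of the
index set, there is an edge leaving `S` (equivalently, the underlying directed graph is
strongly connected). -/
def MatrixIrreducible {N : ℕ} (A : Matrix (Fin N) (Fin N) ℝ) : Prop :=
  ∀ S : Finset (Fin N), S.Nonempty → S ≠ Finset.univ →
    ∃ i ∈ S, ∃ j, j ∉ S ∧ A i j ≠ 0

open Matrix Finset Set Filter Topology

namespace Matrix

variable {n : Type*} [Fintype n]

theorem dotProduct_mulVec_le_abs {A : Matrix n n ℝ} (hA : ∀ i j, 0 ≤ A i j) (x : n → ℝ) :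
    x ⬝ᵥ A *ᵥ x ≤ |x| ⬝ᵥ A *ᵥ |x| := by
  simp only [dotProduct, mulVec, Finset.mul_sum]
  refine sum_le_sum fun i _ => sum_le_sum fun j _ => ?_
  calc x i * (A i j * x j) ≤ |x i * (A i j * x j)| := le_abs_self _
    _ = |x| i * (A i j * |x| j) := by simp [abs_mul, abs_of_nonneg (hA i j)]

namespace IsHermitian

variable [DecidableEq n] {A : Matrix n n ℝ} (hA : A.IsHermitian) {μ : ℝ}
include hA

theorem posSemidef_smul_one_sub (hμ : ∀ i, hA.eigenvalues i ≤ μ) : (μ • 1 - A).PosSemidef := by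
  rw [← Algebra.algebraMap_eq_smul_one]
  refine posSemidef_iff_isHermitian_and_spectrum_nonneg.2 ⟨?_, ?_⟩
  · exact (isHermitian_diagonal_of_self_adjoint _ (funext fun _ => rfl)).sub hA
  · rw [← spectrum.singleton_sub_eq, hA.spectrum_real_eq_range_eigenvalues]
    rintro _ ⟨_, rfl, _, ⟨i, rfl⟩, rfl⟩
    exact sub_nonneg.2 (hμ i)

theorem dotProduct_mulVec_le (hμ : ∀ i, hA.eigenvalues i ≤ μ) (x : n → ℝ) :
    x ⬝ᵥ A *ᵥ x ≤ μ * (x ⬝ᵥ x) := by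
  have := (hA.posSemidef_smul_one_sub hμ).dotProduct_mulVec_nonneg x
  rw [star_trivial, sub_mulVec, smul_mulVec, one_mulVec, dotProduct_sub, dotProduct_smul,
    smul_eq_mul] at this
  linarith

theorem mulVec_eq_smul_of_dotProduct_mulVec_eq (hμ : ∀ i, hA.eigenvalues i ≤ μ) {x : n → ℝ}
    (hx : x ⬝ᵥ A *ᵥ x = μ * (x ⬝ᵥ x)) : A *ᵥ x = μ • x := by
  have := ((hA.posSemidef_smul_one_sub hμ).dotProduct_mulVec_zero_iff x).1 (by
    rw [star_trivial, sub_mulVec, smul_mulVec, one_mulVec, dotProduct_sub, dotProduct_smul,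
      smul_eq_mul, hx, sub_self])
  rw [sub_mulVec, smul_mulVec, one_mulVec, sub_eq_zero] at this
  exact this.symm

end IsHermitian

end Matrix

section Perron

variable {N : ℕ} {A : Matrix (Fin N) (Fin N) ℝ}

theorem MatrixIrreducible.pos_of_mulVec_eq_smul (hirr : MatrixIrreducible A)
    (hA : ∀ i j, 0 ≤ A i j) {μ : ℝ} {w : Fin N → ℝ} (hw_nonneg : 0 ≤ w) (hw_ne : w ≠ 0)
    (hw : A *ᵥ w = μ • w) (i : Fin N) : 0 < w i := by
  by_contra! hi
  set Z := Finset.univ.filter fun j => w j = 0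
  have hZ_ne : Z ≠ Finset.univ := fun h => hw_ne <| funext fun j => by
    simpa [Z] using (Finset.ext_iff.1 h j).2 (Finset.mem_univ j)
  obtain ⟨j, hjZ, k, hkZ, hjk⟩ :=
    hirr Z ⟨i, by simpa [Z] using le_antisymm hi (hw_nonneg i)⟩ hZ_ne
  simp only [Z, Finset.mem_filter, Finset.mem_univ, true_and] at hjZ hkZ
  have : 0 < (A *ᵥ w) j := calc
    0 < A j k * w k := mul_pos ((hA j k).lt_of_ne' hjk) ((hw_nonneg k).lt_of_ne' hkZ)
    _ ≤ ∑ l, A j l * w l :=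
      single_le_sum (f := fun l => A j l * w l) (fun l _ => mul_nonneg (hA j l) (hw_nonneg l))
        (Finset.mem_univ k)
  simp [hw, hjZ] at this

theorem Matrix.IsHermitian.exists_pos_mulVec_eq_smul (hA : A.IsHermitian)
    (hA_nonneg : ∀ i j, 0 ≤ A i j) (hirr : MatrixIrreducible A) {μ : ℝ}
    (hμ : ∀ k, hA.eigenvalues k ≤ μ) {k : Fin N} (hk : hA.eigenvalues k = μ) :
    ∃ v : Fin N → ℝ, (∀ i, 0 < v i) ∧ A *ᵥ v = μ • v := by
  set u : Fin N → ℝ := ⇑(hA.eigenvectorBasis k)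
  have hu : A *ᵥ u = μ • u := hk ▸ hA.mulVec_eigenvectorBasis k
  have hu_ne : u ≠ 0 := fun h =>
    hA.eigenvectorBasis.orthonormal.ne_zero k (by ext i; exact congrFun h i)
  have habs : A *ᵥ |u| = μ • |u| := by
    refine hA.mulVec_eq_smul_of_dotProduct_mulVec_eq hμ
      (le_antisymm (hA.dotProduct_mulVec_le hμ _) ?_)
    calc μ * (|u| ⬝ᵥ |u|) = u ⬝ᵥ A *ᵥ u := by
          simp [hu, dotProduct, abs_mul_abs_self, Finset.mul_sum, mul_left_comm]
      _ ≤ |u| ⬝ᵥ A *ᵥ |u| := dotProduct_mulVec_le_abs hA_nonneg u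
  exact ⟨|u|, hirr.pos_of_mulVec_eq_smul hA_nonneg (abs_nonneg u)
    (fun h => hu_ne (funext fun i => abs_eq_zero.1 (congrFun h i))) habs, habs⟩

end Perron

theorem HasDerivAt.nonneg_of_eventually_le_left {f : ℝ → ℝ} {f' a : ℝ} (hf : HasDerivAt f f' a)
    (hle : ∀ᶠ t in 𝓝[<] a, f t ≤ f a) : 0 ≤ f' := by
  refine ge_of_tendsto (hasDerivAt_iff_tendsto_slope_left_right.1 hf).1 ?_
  filter_upwards [hle, self_mem_nhdsWithin] with t hft (ht : t < a)
  rw [slope_def_field]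
  exact div_nonneg_of_nonpos (sub_nonpos.2 hft) (sub_nonpos.2 ht.le)

theorem forall_neg_of_deriv_neg_at_contact {ι : Type*} [Finite ι] {f f' : ι → ℝ → ℝ} {T : ℝ}
    (hf : ∀ k, ∀ t ∈ Icc 0 T, HasDerivAt (f k) (f' k t) t) (h0 : ∀ k, f k 0 < 0)
    (hcontact : ∀ t ∈ Ioc 0 T, (∀ k, f k t ≤ 0) → ∀ k, f k t = 0 → f' k t < 0) :
    ∀ k, ∀ t ∈ Icc 0 T, f k t < 0 := by
  by_contra! hbad
  obtain ⟨k₁, t₁, ht₁, hk₁⟩ := hbad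
  set S := ⋃ k, Icc 0 T ∩ f k ⁻¹' Ici 0
  have hS_closed : IsClosed S := isClosed_iUnion_of_finite fun k =>
    ContinuousOn.preimage_isClosed_of_isClosed
      (fun t ht => (hf k t ht).continuousAt.continuousWithinAt) isClosed_Icc isClosed_Ici
  have hS_bdd : BddBelow S := ⟨0, fun t ht => (mem_iUnion.1 ht).choose_spec.1.1⟩
  have hcS : sInf S ∈ S := hS_closed.csInf_mem ⟨t₁, mem_iUnion.2 ⟨k₁, ht₁, hk₁⟩⟩ hS_bdd
  set c := sInf S
  obtain ⟨k, ⟨hc0, hcT⟩, hkc⟩ := mem_iUnion.1 hcS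
  have hc_pos : 0 < c := hc0.lt_of_ne fun h => (h0 k).not_ge (h ▸ hkc)
  have hleft : ∀ j, ∀ᶠ t in 𝓝[<] c, f j t < 0 := fun j => by
    filter_upwards [Ioo_mem_nhdsLT hc_pos] with t ht
    by_contra! h
    exact (csInf_le hS_bdd (mem_iUnion.2 ⟨j, ⟨ht.1.le, ht.2.le.trans hcT⟩, h⟩)).not_gt ht.2
  have hle : ∀ j, f j c ≤ 0 := fun j =>
    le_of_tendsto ((hf j c ⟨hc0, hcT⟩).continuousAt.tendsto.mono_left nhdsWithin_le_nhds)
      ((hleft j).mono fun _ => le_of_lt)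
  have hkc0 : f k c = 0 := (hle k).antisymm hkc
  exact (hcontact c ⟨hc_pos, hcT⟩ hle k hkc0).not_ge <|
    (hf k c ⟨hc0, hcT⟩).nonneg_of_eventually_le_left ((hleft k).mono fun _ ht => hkc0 ▸ ht.le)

section SIS

variable {ι : Type*} [Fintype ι]

def sisField (A : Matrix ι ι ℝ) (δ β : ℝ) (x : ι → ℝ) (i : ι) : ℝ :=
  -δ * x i + β * (A *ᵥ x) i * (1 - x i)

def IsSISSolution (A : Matrix ι ι ℝ) (δ β : ℝ) (p : ℝ → ι → ℝ) : Prop :=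
  ∀ i, ∀ t, 0 ≤ t → HasDerivAt (fun s => p s i) (sisField A δ β (p t) i) t

variable {A : Matrix ι ι ℝ} {δ β : ℝ} {p : ℝ → ι → ℝ}

theorem IsSISSolution.nonneg (hA : ∀ i j, 0 ≤ A i j) (hδ : 0 ≤ δ) (hβ : 0 ≤ β)
    (hp : IsSISSolution A δ β p) (h0 : ∀ i, 0 ≤ p 0 i) {t : ℝ} (ht : 0 ≤ t) (i : ι) :
    0 ≤ p t i := by
  set r := ∑ i, ∑ j, A i j
  have hrow : ∀ i, ∑ j, A i j ≤ r := fun i =>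
    single_le_sum (fun i _ => sum_nonneg fun j _ => hA i j) (Finset.mem_univ i)
  have hr : 0 ≤ r := sum_nonneg fun i _ => sum_nonneg fun j _ => hA i j
  refine le_of_forall_pos_lt_add fun η hη => ?_
  -- the barrier `-η e^{K(s-t)}` stays in `[-η, 0)` on `[0, t]`, which controls the quadratic term
  set K := β * r * (1 + η) + 1
  set z : ℝ → ℝ := fun s => η * Real.exp (K * (s - t))
  have hz_pos : ∀ s, 0 < z s := fun s => by positivity
  have hz_le : ∀ s ≤ t, z s ≤ η := fun s hs =>
    mul_le_of_le_one_right hη.le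
      (Real.exp_le_one_iff.2 (mul_nonpos_of_nonneg_of_nonpos (by positivity) (by linarith)))
  have hz : ∀ s, HasDerivAt z (K * z s) s := fun s =>
    ((((hasDerivAt_id s).sub_const t).const_mul K).exp.const_mul η).congr_deriv (by
      simp only [z, id]; ring)
  have key := forall_neg_of_deriv_neg_at_contact (f := fun j s => -p s j - z s)
    (f' := fun j s => -sisField A δ β (p s) j - K * z s) (T := t)
    (fun j s hs => ((hp j s hs.1).neg).sub (hz s)) (fun j => by linarith [h0 j, hz_pos 0]) ?_
    i t ⟨ht, le_rfl⟩
  · simp only [z, sub_self, mul_zero, Real.exp_zero, mul_one] at key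
    linarith
  intro s hs hall j hj
  have hps : ∀ k, -z s ≤ p s k := fun k => by linarith [hall k]
  have hS : -(r * z s) ≤ (A *ᵥ p s) j := calc
    -(r * z s) ≤ ∑ k, A j k * -z s := by
        rw [← sum_mul]; nlinarith [hrow j, hz_pos s]
    _ ≤ (A *ᵥ p s) j := sum_le_sum fun k _ => mul_le_mul_of_nonneg_left (hps k) (hA j k)
  have hpj : p s j = -z s := by linarith
  have hzs := hz_le s hs.2
  have hzs_pos := hz_pos s
  simp only [sisField, hpj]
  nlinarith [mul_le_mul_of_nonneg_left hS hβ, mul_nonneg hβ hr,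
    mul_nonneg (mul_nonneg hβ hr) hzs_pos.le]

theorem IsSISSolution.le_one (hA : ∀ i j, 0 ≤ A i j) (hδ : 0 < δ) (hβ : 0 ≤ β)
    (hp : IsSISSolution A δ β p) (h0 : ∀ i, p 0 i ≤ 1)
    (hnn : ∀ t, 0 ≤ t → ∀ i, 0 ≤ p t i) {t : ℝ} (ht : 0 ≤ t) (i : ι) : p t i ≤ 1 := by
  refine le_of_forall_pos_lt_add fun η hη => ?_
  have key := forall_neg_of_deriv_neg_at_contact (f := fun j s => p s j - (1 + η))
    (f' := fun j s => sisField A δ β (p s) j) (T := t)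
    (fun j s hs => (hp j s hs.1).sub_const _) (fun j => by linarith [h0 j]) ?_ i t ⟨ht, le_rfl⟩
  · linarith
  intro s hs _ j hj
  have hS : 0 ≤ (A *ᵥ p s) j := sum_nonneg fun k _ => mul_nonneg (hA j k) (hnn s hs.1.le k)
  have hpj : p s j = 1 + η := by linarith
  simp only [sisField, hpj]
  nlinarith [mul_nonneg hβ hS]

theorem IsSISSolution.lt_mul_inv (hA : ∀ i j, 0 ≤ A i j) (hβ : 0 ≤ β) {μ : ℝ}
    (hμδ : β * μ ≤ δ) {v : ι → ℝ} (hv : A *ᵥ v = μ • v) {a c : ℝ} (ha : 0 < a)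
    (hav : ∀ i, a < v i) (hc : 0 ≤ c) (hcv : ∀ i, c < β * μ * v i)
    (hp : IsSISSolution A δ β p) (hle : ∀ t, 0 ≤ t → ∀ i, p t i ≤ 1) {t : ℝ} (ht : 0 ≤ t)
    (i : ι) : p t i < v i * (a + c * t)⁻¹ := by
  set y : ℝ → ℝ := fun s => (a + c * s)⁻¹
  have hlin_pos : ∀ s, 0 ≤ s → 0 < a + c * s := fun s hs => by positivity
  have hy : ∀ s, 0 ≤ s → HasDerivAt y (-c * y s ^ 2) s := fun s hs =>
    (((hasDerivAt_id s).const_mul c |>.const_add a).inv (hlin_pos s hs).ne').congr_deriv (by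
      simp only [y, id, inv_pow]; ring)
  refine forall_neg_of_deriv_neg_at_contact (f := fun j s => p s j - v j * y s)
    (f' := fun j s => sisField A δ β (p s) j - v j * (-c * y s ^ 2)) (T := t)
    (fun j s hs => (hp j s hs.1).sub ((hy s hs.1).const_mul (v j))) (fun j => ?_) ?_
    i t ⟨ht, le_rfl⟩ |> sub_neg.1
  · have : 1 < v j * a⁻¹ := by rw [← div_eq_mul_inv, one_lt_div ha]; exact hav j
    simp only [y, mul_zero, add_zero]
    linarith [hle 0 le_rfl j]
  intro s hs hall j hj
  have hys : 0 < y s := inv_pos.2 (hlin_pos s hs.1.le)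
  have hvj : 0 < v j := ha.trans (hav j)
  have hS : (A *ᵥ p s) j ≤ μ * v j * y s := calc
    (A *ᵥ p s) j ≤ ∑ k, A j k * (v k * y s) :=
        sum_le_sum fun k _ => mul_le_mul_of_nonneg_left (by linarith [hall k]) (hA j k)
    _ = μ * v j * y s := by
        have := congrFun hv j
        simp only [mulVec, dotProduct, Pi.smul_apply, smul_eq_mul] at this
        simp only [← mul_assoc, ← sum_mul, this]
  have hpj : p s j = v j * y s := by linarith
  have h1p : 0 ≤ 1 - p s j := by linarith [hle s hs.1.le j]
  simp only [sisField, hpj]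
  rw [hpj] at h1p
  -- `pⱼ' ≤ (βμ - δ) vⱼ y - βμ vⱼ² y²` and `c < βμ vⱼ`
  nlinarith [mul_le_mul_of_nonneg_right (mul_le_mul_of_nonneg_left hS hβ) h1p,
    mul_nonpos_of_nonpos_of_nonneg (sub_nonpos.2 hμδ) (mul_pos hvj hys).le,
    mul_neg_of_neg_of_pos (sub_neg.2 (hcv j)) (mul_pos hvj (pow_pos hys 2))]

theorem IsSISSolution.tendsto_zero (hA : ∀ i j, 0 ≤ A i j) (hβ : 0 < β) {μ : ℝ} (hμ : 0 < μ)
    (hμδ : β * μ ≤ δ) {v : ι → ℝ} (hv : A *ᵥ v = μ • v) (hv_pos : ∀ i, 0 < v i)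
    (hp : IsSISSolution A δ β p) (hnn : ∀ t, 0 ≤ t → ∀ i, 0 ≤ p t i)
    (hle : ∀ t, 0 ≤ t → ∀ i, p t i ≤ 1) : Tendsto p atTop (𝓝 0) := by
  obtain ⟨a, hav, ha⟩ := ((eventually_all.2 fun i => eventually_lt_nhds (hv_pos i)).filter_mono
    nhdsWithin_le_nhds |>.and (self_mem_nhdsWithin (s := Ioi 0))).exists
  have hc : 0 < β * μ * a := by positivity
  rw [tendsto_pi_nhds]
  intro i
  have hbound : Tendsto (fun t => v i * (a + β * μ * a * t)⁻¹) atTop (𝓝 0) := by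
    simpa using (tendsto_inv_atTop_zero.comp <| tendsto_atTop_add_const_left _ a <|
      tendsto_id.const_mul_atTop hc).const_mul (v i)
  refine tendsto_of_tendsto_of_tendsto_of_le_of_le' tendsto_const_nhds hbound ?_ ?_
  · filter_upwards [eventually_ge_atTop 0] with t ht using hnn t ht i
  · filter_upwards [eventually_ge_atTop 0] with t ht
    exact (hp.lt_mul_inv hA hβ.le hμδ hv ha hav hc.le
      (fun j => mul_lt_mul_of_pos_left (hav j) (by positivity)) hle ht i).le

end SIS

theorem stmt_6_general (N : ℕ) (hN : 1 ≤ N)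
    (A : Matrix (Fin N) (Fin N) ℝ)
    (hsym : A.IsHermitian)
    (h01 : ∀ i j, A i j = 0 ∨ A i j = 1)
    (hirr : MatrixIrreducible A)
    (δ β : ℝ) (hδ : 0 < δ) (hβ : 0 < β)
    (lam : ℝ)
    (hlam : lam = Finset.univ.sup'
      (Finset.univ_nonempty_iff.mpr (Fin.pos_iff_nonempty.mp hN)) hsym.eigenvalues)
    (hth : β / δ ≤ 1 / lam)
    (p : ℝ → Fin N → ℝ)
    (h0 : ∀ i, p 0 i ∈ Set.Icc (0 : ℝ) 1)
    (hode : ∀ i, ∀ t : ℝ, 0 ≤ t →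
      HasDerivAt (fun s => p s i)
        (-δ * p t i + β * ∑ j, A i j * p t j * (1 - p t i)) t) :
    Filter.Tendsto p Filter.atTop (nhds 0) := by
  have hA : ∀ i j, 0 ≤ A i j := fun i j => by rcases h01 i j with h | h <;> simp [h]
  have hp : IsSISSolution A δ β p := fun i t ht => (hode i t ht).congr_deriv (by
    rw [sisField, mul_assoc, mulVec, dotProduct, sum_mul])
  have hlam_ge : ∀ k, hsym.eigenvalues k ≤ lam := fun k => hlam ▸ le_sup' _ (Finset.mem_univ k)
  obtain ⟨k, -, hk⟩ := exists_mem_eq_sup' _ hsym.eigenvalues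
  have hlam_pos : 0 < lam := by
    by_contra! h
    linarith [one_div_nonpos.2 h, div_pos hβ hδ]
  have hβlam : β * lam ≤ δ := by rwa [div_le_div_iff₀ hδ hlam_pos, one_mul] at hth
  obtain ⟨v, hv_pos, hv⟩ := hsym.exists_pos_mulVec_eq_smul hA hirr hlam_ge (hk.symm.trans hlam.symm)
  have hnn : ∀ t, 0 ≤ t → ∀ i, 0 ≤ p t i := fun t ht =>
    hp.nonneg hA hδ.le hβ.le (fun i => (h0 i).1) ht
  exact hp.tendsto_zero hA hβ hlam_pos hβlam hv hv_pos hnn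
    (fun t ht => hp.le_one hA hδ hβ.le (fun i => (h0 i).2) hnn ht)

/-- Homogeneous SIS network model: if `β/δ ≤ 1/λ_max(A)` for the adjacency
matrix `A` of a connected undirected graph, then every solution of
`pᵢ' = −δ pᵢ + β Σⱼ a_{ij} pⱼ (1 − pᵢ)` starting in `[0,1]^N` converges to `0`. -/
theorem stmt_6 (N : ℕ) (hN : 1 ≤ N)
    (A : Matrix (Fin N) (Fin N) ℝ)
    (hsym : A.IsHermitian)
    (h01 : ∀ i j, A i j = 0 ∨ A i j = 1)
    (hdiag : ∀ i, A i i = 0)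
    (hirr : MatrixIrreducible A)
    (δ β : ℝ) (hδ : 0 < δ) (hβ : 0 < β)
    (lam : ℝ)
    (hlam : lam = Finset.univ.sup'
      (Finset.univ_nonempty_iff.mpr (Fin.pos_iff_nonempty.mp hN)) hsym.eigenvalues)
    (hth : β / δ ≤ 1 / lam)
    (p : ℝ → Fin N → ℝ)
    (h0 : ∀ i, p 0 i ∈ Set.Icc (0 : ℝ) 1)
    (hode : ∀ i, ∀ t : ℝ, 0 ≤ t →
      HasDerivAt (fun s => p s i)
        (-δ * p t i + β * ∑ j, A i j * p t j * (1 - p t i)) t) :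
    Filter.Tendsto p Filter.atTop (nhds 0) :=
  stmt_6_general N hN A hsym h01 hirr δ β hδ hβ lam hlam hth p h0 hode
end

section
/- Let N ≥ 1, let D = diag(δ₁,…,δ_N) with δᵢ > 0, let B = (β_{ij}) be a nonnegative matrix, and let p : [0,∞) → ℝ^N be differentiable with p(0) ∈ [0,1]^N and pᵢ'(t) = −δᵢ pᵢ(t) + Σ_{j=1}^N β_{ij} p_j(t)(1 − pᵢ(t)) for all i and all t ≥ 0. Then for every t ≥ 0 and every i, pᵢ(t) ≤ (exp(t(B − D)) p(0))ᵢ; that is, the SIS solution is bounded componentwise by the solution of the linear system q̇ = (B − D) q with the same initial condition. -/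
/-!
Write the SIS dynamics as `ṗ = (B - D) p + h` with `hᵢ = -pᵢ (B p)ᵢ`. A first-touch argument shows
that the flow keeps `p` in the nonnegative orthant, so `h ≤ 0` along the solution. Since `B - D`
has nonnegative off-diagonal entries, `exp (s • (B - D))` is entrywise nonnegative for `s ≥ 0`.
Hence `s ↦ exp ((t - s) • (B - D)) *ᵥ p s`, whose derivative is `exp ((t - s) • (B - D)) *ᵥ h s`,
is componentwise antitone on `[0, t]`; its values at `s = t` and `s = 0` are the two sides of
the bound.
-/

open NormedSpace

open Set Filter

theorem HasDerivAt.nonpos_of_le_left {f : ℝ → ℝ} {f' a b : ℝ} (hab : a < b)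
    (hf : HasDerivAt f f' b) (hle : ∀ x ∈ Ioo a b, f b ≤ f x) : f' ≤ 0 := by
  refine le_of_tendsto ((hasDerivAt_iff_tendsto_slope.1 hf).mono_left
    (nhdsWithin_mono (s := Iio b) b fun x hx => ne_of_lt hx)) ?_
  filter_upwards [Ioo_mem_nhdsLT hab] with x hx
  exact slope_def_field f b x ▸
    div_nonpos_of_nonneg_of_nonpos (sub_nonneg.2 (hle x hx)) (by linarith [hx.2])

section Invariance

variable {ι : Type*} [Finite ι]

theorem forall_pos_of_hasDerivAt_of_boundary {f f' : ℝ → ι → ℝ} {T : ℝ}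
    (hf : ∀ t ∈ Icc 0 T, ∀ i, HasDerivAt (fun s => f s i) (f' t i) t) (h0 : ∀ i, 0 < f 0 i)
    (hboundary : ∀ t ∈ Ioc 0 T, ∀ i, (∀ j, 0 ≤ f t j) → f t i = 0 → 0 < f' t i) :
    ∀ t ∈ Icc 0 T, ∀ i, 0 < f t i := by
  by_contra! hneg
  obtain ⟨t, ht, i, hi⟩ := hneg
  set S := ⋃ i, Icc 0 T ∩ {t | f t i ≤ 0}
  have hS : IsCompact S :=
    isCompact_Icc.of_isClosed_subset
      (isClosed_iUnion_of_finite fun i => ContinuousOn.preimage_isClosed_of_isClosed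
        (fun s hs => (hf s hs i).continuousAt.continuousWithinAt) isClosed_Icc isClosed_Iic)
      (iUnion_subset fun i => inter_subset_left)
  obtain ⟨t₁, hS₁, hleast⟩ := hS.exists_isLeast ⟨t, mem_iUnion.2 ⟨i, ht, hi⟩⟩
  obtain ⟨i, ht₁, hi⟩ := mem_iUnion.1 hS₁
  have hpos : 0 < t₁ := ht₁.1.lt_of_ne fun h => (h0 i).not_ge (h ▸ hi)
  have hbefore : ∀ s ∈ Ioo 0 t₁, ∀ j, 0 < f s j := fun s hs j => lt_of_not_ge fun hle =>
    hs.2.not_ge (hleast (mem_iUnion.2 ⟨j, ⟨hs.1.le, hs.2.le.trans ht₁.2⟩, hle⟩))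
  have hat : ∀ j, 0 ≤ f t₁ j := fun j =>
    ge_of_tendsto ((hf t₁ ht₁ j).continuousAt.tendsto.mono_left nhdsWithin_le_nhds)
      (eventually_of_mem (Ioo_mem_nhdsLT hpos) fun s hs => (hbefore s hs j).le)
  have hzero : f t₁ i = 0 := le_antisymm hi (hat i)
  have hderiv := (hf t₁ ht₁ i).nonpos_of_le_left hpos fun s hs => hzero ▸ (hbefore s hs i).le
  exact hderiv.not_gt (hboundary t₁ ⟨hpos, ht₁.2⟩ i hat hzero)

theorem forall_nonneg_of_hasDerivAt_of_boundary {x x' : ℝ → ι → ℝ} {K : ℝ} (hK : 0 ≤ K)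
    (hx : ∀ t, 0 ≤ t → ∀ i, HasDerivAt (fun s => x s i) (x' t i) t) (h0 : 0 ≤ x 0)
    (hboundary : ∀ t, 0 < t → ∀ m ∈ Ioc (0 : ℝ) 1, ∀ i,
      (∀ j, -m ≤ x t j) → x t i = -m → -(K * m) < x' t i) :
    ∀ t, 0 ≤ t → 0 ≤ x t := by
  intro T hT i
  by_contra! hneg
  set a := min 1 (-x T i)
  have ha : 0 < a := lt_min one_pos (neg_pos.2 hneg)
  -- `x + m` starts positive, and where it touches `0` its derivative is `x' + K m > 0`
  set m : ℝ → ℝ := fun t => a * Real.exp (K * (t - T))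
  have hm : ∀ t, HasDerivAt m (K * m t) t := fun t =>
    ((((hasDerivAt_id t).sub_const T).const_mul K).exp.const_mul a).congr_deriv
      (by simp only [m, id]; ring)
  have hm_mem : ∀ t ≤ T, m t ∈ Ioc 0 1 := fun t ht =>
    ⟨by positivity, (mul_le_of_le_one_right ha.le (Real.exp_le_one_iff.2
      (mul_nonpos_of_nonneg_of_nonpos hK (by linarith)))).trans (min_le_left _ _)⟩
  have hshift := forall_pos_of_hasDerivAt_of_boundary (f := fun t j => x t j + m t)
    (f' := fun t j => x' t j + K * m t) (T := T) (fun t ht j => (hx t ht.1 j).add (hm t))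
    (fun j => add_pos_of_nonneg_of_pos (h0 j) (hm_mem 0 hT).1)
    (fun t ht j hnn hj => by
      have := hboundary t ht.1 (m t) (hm_mem t ht.2) j (fun k => by linarith [hnn k])
        (by linarith)
      linarith)
    T ⟨hT, le_rfl⟩ i
  simp only [m, sub_self, mul_zero, Real.exp_zero, mul_one] at hshift
  linarith [min_le_right 1 (-x T i)]

end Invariance

namespace Matrix

variable {ι : Type*} [Fintype ι]

theorem mulVec_nonpos {α : Type*} [Semiring α] [PartialOrder α] [IsOrderedRing α]
    {M : Matrix ι ι α} (hM : ∀ i j, 0 ≤ M i j) {v : ι → α} (hv : v ≤ 0) : M *ᵥ v ≤ 0 := fun i =>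
  Finset.sum_nonpos fun j _ => mul_nonpos_of_nonneg_of_nonpos (hM i j) (hv j)

variable [DecidableEq ι]

theorem exp_apply_nonneg_of_nonneg {M : Matrix ι ι ℝ} (hM : ∀ i j, 0 ≤ M i j) (i j : ι) :
    0 ≤ exp M i j := by
  let := Matrix.linftyOpNormedRing (n := ι) (α := ℝ)
  let := Matrix.linftyOpNormedAlgebra (n := ι) (R := ℝ) (α := ℝ)
  refine (Pi.hasSum.1 (Pi.hasSum.1 (exp_series_hasSum_exp' (𝕂 := ℝ) M) i) j).nonneg fun n => ?_
  exact mul_nonneg (by positivity) (pow_apply_nonneg hM n i j)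

theorem exp_apply_nonneg_of_offDiag_nonneg {A : Matrix ι ι ℝ}
    (hA : ∀ i j, i ≠ j → 0 ≤ A i j) (i j : ι) : 0 ≤ exp A i j := by
  set c := ∑ k, |A k k|
  have hM : ∀ i j, 0 ≤ (A + scalar ι c) i j := by
    intro i j
    rcases eq_or_ne i j with rfl | hij
    · have : |A i i| ≤ c := Finset.single_le_sum (f := fun k => |A k k|)
        (fun k _ => abs_nonneg _) (Finset.mem_univ i)
      simp only [add_apply, scalar_apply, diagonal_apply_eq]
      linarith [neg_abs_le (A i i)]
    · simpa [hij] using hA i j hij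
  have hsplit : A = (A + scalar ι c) + diagonal fun _ => -c := by
    rw [← scalar_apply, map_neg]; abel
  rw [hsplit, exp_add_of_commute (A + scalar ι c) (diagonal fun _ => -c)
    (scalar_commute (-c) (fun _ => Commute.all _ _) _).symm, exp_diagonal, mul_diagonal]
  exact mul_nonneg (exp_apply_nonneg_of_nonneg hM i j)
    (by simp [← Real.exp_eq_exp_ℝ, Real.exp_nonneg])

theorem hasDerivAt_exp_sub_smul_mulVec (A : Matrix ι ι ℝ) {x : ℝ → ι → ℝ} {x' : ι → ℝ}
    {t s : ℝ} (hx : HasDerivAt x x' s) :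
    HasDerivAt (fun s => exp ((t - s) • A) *ᵥ x s)
      (exp ((t - s) • A) *ᵥ (x' - A *ᵥ x s)) s := by
  open scoped Matrix.Norms.Operator in
  let L : Matrix ι ι ℝ →L[ℝ] (ι → ℝ) →L[ℝ] (ι → ℝ) :=
    LinearMap.toContinuousLinearMap
      (LinearMap.toContinuousLinearMap.toLinearMap ∘ₗ Matrix.toLin'.toLinearMap)
  open scoped Matrix.Norms.Operator in
  have hL := (L.hasFDerivAt.comp_hasDerivAt s ((hasDerivAt_exp_smul_const A (t - s)).scomp s
    ((hasDerivAt_id s).const_sub t))).clm_apply hx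
  refine hL.congr_deriv ?_
  change (-1 • (exp ((t - s) • A) * A)) *ᵥ x s + exp ((t - s) • A) *ᵥ x' = _
  rw [neg_one_smul, neg_mulVec, ← mulVec_mulVec, mulVec_sub]
  abel

theorem le_exp_smul_mulVec_of_hasDerivAt {A : Matrix ι ι ℝ} (hA : ∀ i j, i ≠ j → 0 ≤ A i j)
    {x x' : ℝ → ι → ℝ} (hx : ∀ t, 0 ≤ t → HasDerivAt x (x' t) t)
    (hx' : ∀ t, 0 ≤ t → x' t ≤ A *ᵥ x t) {t : ℝ} (ht : 0 ≤ t) :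
    x t ≤ exp (t • A) *ᵥ x 0 := by
  have hg : ∀ s ∈ Icc 0 t, HasDerivAt (fun s => exp ((t - s) • A) *ᵥ x s)
      (exp ((t - s) • A) *ᵥ (x' s - A *ᵥ x s)) s := fun s hs =>
    hasDerivAt_exp_sub_smul_mulVec A (hx s hs.1)
  have hg' : ∀ s ∈ Icc 0 t, exp ((t - s) • A) *ᵥ (x' s - A *ᵥ x s) ≤ 0 := fun s hs =>
    mulVec_nonpos (exp_apply_nonneg_of_offDiag_nonneg fun i j hij => by
      simpa using mul_nonneg (sub_nonneg.2 hs.2) (hA i j hij)) (sub_nonpos.2 (hx' s hs.1))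
  intro i
  have hanti : AntitoneOn (fun s => (exp ((t - s) • A) *ᵥ x s) i) (Icc 0 t) :=
    antitoneOn_of_hasDerivWithinAt_nonpos (convex_Icc 0 t)
      (fun s hs => (hasDerivAt_pi.1 (hg s hs) i).continuousAt.continuousWithinAt)
      (fun s hs => (hasDerivAt_pi.1 (hg s (interior_subset hs)) i).hasDerivWithinAt)
      (fun s hs => hg' s (interior_subset hs) i)
  simpa using hanti ⟨le_rfl, ht⟩ ⟨ht, le_rfl⟩ ht

end Matrix

section SIS

open Matrix

variable {ι : Type*} [Fintype ι] {δ : ι → ℝ} {B : Matrix ι ι ℝ}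

def sisVectorField (δ : ι → ℝ) (B : Matrix ι ι ℝ) (p : ι → ℝ) : ι → ℝ :=
  fun i => -(δ i) * p i + ∑ j, B i j * p j * (1 - p i)

theorem sisVectorField_le_mulVec [DecidableEq ι] (hB : ∀ i j, 0 ≤ B i j) {p : ι → ℝ}
    (hp : 0 ≤ p) : sisVectorField δ B p ≤ (B - diagonal δ) *ᵥ p := by
  intro i
  have hBp : 0 ≤ (B *ᵥ p) i := Finset.sum_nonneg fun j _ => mul_nonneg (hB i j) (hp j)
  have hsplit : sisVectorField δ B p i = ((B - diagonal δ) *ᵥ p) i - p i * (B *ᵥ p) i := by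
    simp only [sisVectorField, sub_mulVec, Pi.sub_apply, mulVec_diagonal, ← Finset.sum_mul]
    simp only [mulVec, dotProduct]
    ring
  rw [hsplit]
  exact sub_le_self _ (mul_nonneg (hp i) hBp)

theorem neg_mul_lt_sisVectorField (hB : ∀ i j, 0 ≤ B i j) {p : ι → ℝ} {m : ℝ}
    (hm : m ∈ Ioc (0 : ℝ) 1) {i : ι} (hp : ∀ j, -m ≤ p j) (hpi : p i = -m) :
    -((∑ k, (|δ k| + 2 * ∑ j, B k j) + 1) * m) < sisVectorField δ B p i := by
  have hR : 0 ≤ ∑ j, B i j := Finset.sum_nonneg fun j _ => hB i j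
  have hrow : |δ i| + 2 * ∑ j, B i j ≤ ∑ k, (|δ k| + 2 * ∑ j, B k j) :=
    Finset.single_le_sum (f := fun k => |δ k| + 2 * ∑ j, B k j)
      (fun k _ => add_nonneg (abs_nonneg _)
        (mul_nonneg zero_le_two (Finset.sum_nonneg fun j _ => hB k j)))
      (Finset.mem_univ i)
  have hBp : -(m * ∑ j, B i j) ≤ ∑ j, B i j * p j := by
    rw [Finset.mul_sum, ← Finset.sum_neg_distrib]
    exact Finset.sum_le_sum fun j _ => by nlinarith [hB i j, hp j]
  have hfield : sisVectorField δ B p i = δ i * m + (1 + m) * ∑ j, B i j * p j := by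
    simp only [sisVectorField, hpi]
    rw [← Finset.sum_mul]
    ring
  rw [hfield]
  nlinarith [mul_le_mul_of_nonneg_left hBp (by linarith [hm.1] : 0 ≤ 1 + m),
    mul_nonneg (sub_nonneg.2 hm.2) (mul_nonneg hm.1.le hR),
    mul_le_mul_of_nonneg_right (neg_abs_le (δ i)) hm.1.le,
    mul_le_mul_of_nonneg_right hrow hm.1.le, hm.1]

theorem nonneg_of_hasDerivAt_sisVectorField (hB : ∀ i j, 0 ≤ B i j) {p : ℝ → ι → ℝ}
    (h0 : 0 ≤ p 0)
    (hode : ∀ i, ∀ t, 0 ≤ t → HasDerivAt (fun s => p s i) (sisVectorField δ B (p t) i) t) :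
    ∀ t, 0 ≤ t → 0 ≤ p t :=
  forall_nonneg_of_hasDerivAt_of_boundary
    (add_nonneg (Finset.sum_nonneg fun k _ => add_nonneg (abs_nonneg _)
      (mul_nonneg zero_le_two (Finset.sum_nonneg fun j _ => hB k j))) zero_le_one)
    (fun t ht i => hode i t ht) h0
    (fun _ _ _ hm _ hp hpi => neg_mul_lt_sisVectorField hB hm hp hpi)

end SIS

theorem stmt_10_general (N : ℕ)
    (δ : Fin N → ℝ)
    (B : Matrix (Fin N) (Fin N) ℝ) (hB : ∀ i j, 0 ≤ B i j)
    (p : ℝ → Fin N → ℝ)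
    (h0 : ∀ i, p 0 i ∈ Set.Icc (0 : ℝ) 1)
    (hode : ∀ i, ∀ t : ℝ, 0 ≤ t →
      HasDerivAt (fun s => p s i)
        (-(δ i) * p t i + ∑ j, B i j * p t j * (1 - p t i)) t) :
    ∀ t : ℝ, 0 ≤ t → ∀ i,
      p t i ≤ ((exp (t • (B - Matrix.diagonal δ))).mulVec (p 0)) i := by
  intro t ht
  have hp : ∀ t, 0 ≤ t → 0 ≤ p t :=
    nonneg_of_hasDerivAt_sisVectorField hB (fun i => (h0 i).1) hode
  refine Matrix.le_exp_smul_mulVec_of_hasDerivAt (x' := fun t => sisVectorField δ B (p t))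
    (fun i j hij => ?_) (fun t ht => hasDerivAt_pi.2 fun i => hode i t ht)
    (fun t ht => sisVectorField_le_mulVec hB (hp t ht)) ht
  simpa [hij] using hB i j

/-- The solution of the heterogeneous SIS network model
`pᵢ' = −δᵢ pᵢ + Σⱼ β_{ij} pⱼ (1 − pᵢ)` starting in `[0,1]^N` is bounded componentwise by the
solution `exp(t(B − D)) p(0)` of the linearized system `q' = (B − D) q`. -/
theorem stmt_10 (N : ℕ) (hN : 1 ≤ N)
    (δ : Fin N → ℝ) (hδ : ∀ i, 0 < δ i)
    (B : Matrix (Fin N) (Fin N) ℝ) (hB : ∀ i j, 0 ≤ B i j)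
    (p : ℝ → Fin N → ℝ)
    (h0 : ∀ i, p 0 i ∈ Set.Icc (0 : ℝ) 1)
    (hode : ∀ i, ∀ t : ℝ, 0 ≤ t →
      HasDerivAt (fun s => p s i)
        (-(δ i) * p t i + ∑ j, B i j * p t j * (1 - p t i)) t) :
    ∀ t : ℝ, 0 ≤ t → ∀ i,
      p t i ≤ ((exp (t • (B - Matrix.diagonal δ))).mulVec (p 0)) i :=
  stmt_10_general N δ B hB p h0 hode
end
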